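/- arXiv:2509.15537 — 2 statements merged into one kernel-verified Lean document; each statement's English description precedes it below -/
import Mathlib

section
/- Let G be a simple graph on a vertex type V, let v1 and v3 be distinct vertices, and let G' be the clasp of G at (v1, v3). Then for every vertex v with v ≠ v1 and v ≠ v3: if the neighborhood of v in G is a singleton {w}, then the neighborhood of v in G' is also a singleton; precisely, if w = v3 then the neighborhood of v in G' is {v1}, and if w ≠ v3 then the neighborhood of v in G' is {w}. -/
/-! Away from `v₁` and `v₃`, the clasp changes a neighbourhood only by renaming the neighbour
`v₃` to `v₁`, so a leaf stays a leaf. -/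

/-- The clasp of a simple graph `G` at a pair of vertices `(v₁, v₃)`: `x` and `y` are
adjacent in the clasp iff `{x, y} = {v₁, v₃}`, or `v₃ ∉ {x, y}` and (`x` and `y` are
adjacent in `G`, or `x = v₁` and `y` is adjacent to `v₃` in `G`, or `y = v₁` and `x`
is adjacent to `v₃` in `G`).  (As a simple graph it is in addition loopless.) -/
def SimpleGraph.clasp {V : Type*} (G : SimpleGraph V) (v₁ v₃ : V) : SimpleGraph V :=
  SimpleGraph.fromRel (fun x y =>
    s(x, y) = s(v₁, v₃) ∨
      (x ≠ v₃ ∧ y ≠ v₃ ∧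
        (G.Adj x y ∨ (x = v₁ ∧ G.Adj v₃ y) ∨ (y = v₁ ∧ G.Adj v₃ x))))

namespace SimpleGraph

variable {V : Type*} (G : SimpleGraph V) {v₁ v₃ v : V}

theorem clasp_adj_of_ne (hv₁ : v ≠ v₁) (hv₃ : v ≠ v₃) (u : V) :
    (G.clasp v₁ v₃).Adj v u ↔ u ≠ v₃ ∧ (G.Adj v u ∨ (u = v₁ ∧ G.Adj v₃ v)) := by
  simp only [clasp, fromRel_adj, Sym2.eq_iff, G.adj_comm u v]
  constructor
  · rintro ⟨-, h | h⟩ <;> tauto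
  · rintro ⟨hu₃, hadj | ⟨rfl, hadj⟩⟩
    · exact ⟨hadj.ne, Or.inl (Or.inr ⟨hv₃, hu₃, Or.inl hadj⟩)⟩
    · exact ⟨hv₁, Or.inl (Or.inr ⟨hv₃, hu₃, Or.inr (Or.inr ⟨rfl, hadj⟩)⟩)⟩

theorem neighborSet_clasp_of_adj (h₁₃ : v₁ ≠ v₃) (hv₁ : v ≠ v₁) (hv₃ : v ≠ v₃)
    (h : G.Adj v v₃) :
    (G.clasp v₁ v₃).neighborSet v = insert v₁ (G.neighborSet v \ {v₃}) := by
  ext u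
  simp only [mem_neighborSet, G.clasp_adj_of_ne hv₁ hv₃, Set.mem_insert_iff, Set.mem_sdiff,
    Set.mem_singleton_iff, G.adj_comm v₃ v, h, and_true]
  constructor
  · rintro ⟨hu₃, hadj | rfl⟩
    · exact Or.inr ⟨hadj, hu₃⟩
    · exact Or.inl rfl
  · rintro (rfl | ⟨hadj, hu₃⟩)
    · exact ⟨h₁₃, Or.inr rfl⟩
    · exact ⟨hu₃, Or.inl hadj⟩

theorem neighborSet_clasp_of_not_adj (hv₁ : v ≠ v₁) (hv₃ : v ≠ v₃) (h : ¬G.Adj v v₃) :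
    (G.clasp v₁ v₃).neighborSet v = G.neighborSet v := by
  ext u
  simp only [mem_neighborSet, G.clasp_adj_of_ne hv₁ hv₃, G.adj_comm v₃ v, h, and_false,
    or_false]
  exact ⟨And.right, fun hadj => ⟨fun hu => h (hu ▸ hadj), hadj⟩⟩

end SimpleGraph

/-- Let `G'` be the clasp of `G` at `(v₁, v₃)` with `v₁ ≠ v₃`.
For every vertex `v ∉ {v₁, v₃}` whose neighborhood in `G` is a singleton `{w}`,
the neighborhood of `v` in `G'` is again a singleton: it is `{v₁}` if `w = v₃`,
and `{w}` if `w ≠ v₃`. -/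
theorem stmt_3 {V : Type*} (G : SimpleGraph V) (v₁ v₃ : V) (h₁₃ : v₁ ≠ v₃)
    (v w : V) (hv₁ : v ≠ v₁) (hv₃ : v ≠ v₃)
    (hN : G.neighborSet v = {w}) :
    (w = v₃ → (G.clasp v₁ v₃).neighborSet v = {v₁}) ∧
      (w ≠ v₃ → (G.clasp v₁ v₃).neighborSet v = {w}) := by
  have hadj : G.Adj v v₃ ↔ w = v₃ := by
    rw [← G.mem_neighborSet, hN, Set.mem_singleton_iff, eq_comm]
  constructor
  · intro hw
    rw [G.neighborSet_clasp_of_adj h₁₃ hv₁ hv₃ (hadj.mpr hw), hN, hw, Set.sdiff_self,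
      insert_empty_eq]
  · intro hw
    rw [G.neighborSet_clasp_of_not_adj hv₁ hv₃ (mt hadj.mp hw), hN]
end

section
/- Let G be a connected simple graph on a vertex type V, let v1 and v3 be distinct vertices, and let G' be the clasp of G at (v1, v3). Then G' is connected. -/
namespace SimpleGraph

variable {V W : Type*}

theorem Reachable.of_adj_imp_reachable {G : SimpleGraph V} {H : SimpleGraph W} {f : V → W}
    (hf : ∀ x y, G.Adj x y → H.Reachable (f x) (f y)) {u v : V} (h : G.Reachable u v) :
    H.Reachable (f u) (f v) := by
  rw [reachable_iff_reflTransGen] at h ⊢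
  exact h.lift' f fun x y hxy => (reachable_iff_reflTransGen _ _).mp (hf x y hxy)

variable (G : SimpleGraph V) {v₁ v₃ : V}

theorem clasp_adj_self (h₁₃ : v₁ ≠ v₃) : (G.clasp v₁ v₃).Adj v₁ v₃ :=
  ⟨h₁₃, Or.inl (Or.inl rfl)⟩

variable {G}

theorem clasp_adj_of_adj {x y : V} (hxy : G.Adj x y) (hx : x ≠ v₃) (hy : y ≠ v₃) :
    (G.clasp v₁ v₃).Adj x y :=
  ⟨hxy.ne, Or.inl (Or.inr ⟨hx, hy, Or.inl hxy⟩)⟩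

theorem clasp_reachable_of_adj_right (h₁₃ : v₁ ≠ v₃) {y : V} (hy : G.Adj v₃ y) :
    (G.clasp v₁ v₃).Reachable v₁ y := by
  rcases eq_or_ne v₁ y with rfl | hy₁
  · rfl
  · exact Adj.reachable ⟨hy₁, Or.inl (Or.inr ⟨h₁₃, hy.ne.symm, Or.inr (Or.inl ⟨rfl, hy⟩)⟩)⟩

theorem clasp_reachable_collapse_of_adj [DecidableEq V] (h₁₃ : v₁ ≠ v₃) {x y : V}
    (hxy : G.Adj x y) :
    (G.clasp v₁ v₃).Reachable (if x = v₃ then v₁ else x) (if y = v₃ then v₁ else y) := by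
  by_cases hx : x = v₃ <;> by_cases hy : y = v₃ <;> simp only [hx, hy, if_true, if_false]
  · exact absurd (hx.trans hy.symm) hxy.ne
  · exact clasp_reachable_of_adj_right h₁₃ (hx ▸ hxy)
  · exact (clasp_reachable_of_adj_right h₁₃ (hy ▸ hxy.symm)).symm
  · exact (clasp_adj_of_adj hxy hx hy).reachable

end SimpleGraph

/-- If `G` is a connected simple graph and `v₁ ≠ v₃`, then the clasp
of `G` at `(v₁, v₃)` is connected. -/
theorem stmt_4 {V : Type*} (G : SimpleGraph V) (v₁ v₃ : V) (h₁₃ : v₁ ≠ v₃)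
    (hconn : G.Connected) :
    (G.clasp v₁ v₃).Connected := by
  classical
  refine (SimpleGraph.connected_iff_exists_forall_reachable _).mpr ⟨v₁, fun x => ?_⟩
  rcases eq_or_ne x v₃ with rfl | hx
  · exact (G.clasp_adj_self h₁₃).reachable
  · simpa [h₁₃, hx] using (hconn.preconnected v₁ x).of_adj_imp_reachable
      (f := fun z => if z = v₃ then v₁ else z)
      fun _ _ => SimpleGraph.clasp_reachable_collapse_of_adj h₁₃
end
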